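/- arXiv:2210.09902 — 3 statements merged into one kernel-verified Lean document; each statement's English description precedes it below -/
import Mathlib

section
/- Let V ∈ ℝ^{(n+1) × n_v} be a vertex matrix and M ∈ ℝ^{n_v × N} an incidence matrix with all entries in {0, 1}. Define D = { (λ, δ) ∈ ℝ^{n_v} × ℝ^N : λ = (ξᶜ + 𝟏)/2 and δ = (ξᵇ + 𝟏)/2 for some ξᶜ ∈ [−1, 1]^{n_v} and ξᵇ ∈ {−1, 1}^N with 𝟏ᵀξᶜ = 2 − n_v, 𝟏ᵀξᵇ = 2 − N, and λ − Mδ ≤ 0 componentwise }, and let Z_SOS = { Vλ : (λ, δ) ∈ D }. Then Z_SOS equals the SOS set S = { Vλ : λ ∈ ℝ^{n_v}, λ ≥ 0, 𝟏ᵀλ = 1, and there exists i ∈ {1, …, N} such that λ_j = 0 for every j with M_{j,i} = 0 }. -/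
open Set Matrix

/-- **Theorem 4 (SOS approximation as a hybrid zonotope).**
The hybrid zonotope `Z_SOS = [V 0] D` equals the special ordered set
approximation `S` defined by the vertex matrix `V` and incidence matrix `M`. -/
theorem SOS_equals_hybrid_zonotope {n nv N : ℕ}
    (V : Matrix (Fin (n + 1)) (Fin nv) ℝ)
    (M : Matrix (Fin nv) (Fin N) ℝ)
    (hM : ∀ j i, M j i = 0 ∨ M j i = 1)
    (D : Set ((Fin nv → ℝ) × (Fin N → ℝ)))
    (hD : D = {p | ∃ ξc : Fin nv → ℝ, ∃ ξb : Fin N → ℝ,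
      (∀ j, ξc j ∈ Icc (-1 : ℝ) 1) ∧ (∀ i, ξb i = -1 ∨ ξb i = 1) ∧
      (∑ j, ξc j) = 2 - (nv : ℝ) ∧ (∑ i, ξb i) = 2 - (N : ℝ) ∧
      p.1 = (fun j => (ξc j + 1) / 2) ∧ p.2 = (fun i => (ξb i + 1) / 2) ∧
      (∀ j, p.1 j - M.mulVec p.2 j ≤ 0)})
    (Zsos S : Set (Fin (n + 1) → ℝ))
    (hZ : Zsos = {z | ∃ p ∈ D, z = V.mulVec p.1})
    (hS : S = {z | ∃ lam : Fin nv → ℝ, (∀ j, 0 ≤ lam j) ∧ (∑ j, lam j) = 1 ∧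
      (∃ i : Fin N, ∀ j, M j i = 0 → lam j = 0) ∧ z = V.mulVec lam}) :
    Zsos = S := by
  subst hD hZ hS
  ext z
  simp only [mem_setOf_eq]
  constructor
  · rintro ⟨⟨lam, del⟩, ⟨ξc, ξb, hξc, hξb, hsc, hsb, hp1, hp2, hle⟩, rfl⟩
    simp only at hp1 hp2 hle
    subst hp1 hp2
    -- find the unique index i with ξb i = 1
    have h2 : ∑ k, (ξb k + 1) = 2 := by
      rw [Finset.sum_add_distrib, hsb]; simp
    have hcard : (Finset.univ.filter (fun k => ξb k = 1)).card = 1 := by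
      have : ∑ k, (ξb k + 1) = ∑ k, (if ξb k = 1 then (2:ℝ) else 0) := by
        apply Finset.sum_congr rfl
        intro k _
        rcases hξb k with h | h <;> simp [h] <;> norm_num
      rw [this, ← Finset.sum_filter, Finset.sum_const, nsmul_eq_mul] at h2
      have : ((Finset.univ.filter (fun k => ξb k = 1)).card : ℝ) = 1 := by linarith
      exact_mod_cast this
    obtain ⟨i, hi⟩ := Finset.card_eq_one.mp hcard
    have hib : ξb i = 1 := by
      have : i ∈ Finset.univ.filter (fun k => ξb k = 1) := by rw [hi]; simp
      simpa using this
    have hnot : ∀ k, k ≠ i → ξb k = -1 := by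
      intro k hk
      rcases hξb k with h | h
      · exact h
      · exfalso; apply hk
        have : k ∈ Finset.univ.filter (fun k => ξb k = 1) := by simp [h]
        rw [hi] at this; simpa using this
    have hdel : (fun k => (ξb k + 1) / 2) = (fun k => if k = i then (1:ℝ) else 0) := by
      funext k
      by_cases hk : k = i
      · subst hk; rw [hib]; norm_num
      · rw [hnot k hk]; simp [hk]
    have hmul : ∀ j, M.mulVec (fun k => (ξb k + 1) / 2) j = M j i := by
      intro j
      rw [hdel]
      simp [mulVec, dotProduct, mul_ite]
    refine ⟨fun j => (ξc j + 1) / 2, ?_, ?_, ⟨i, ?_⟩, rfl⟩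
    · intro j; have := (hξc j).1; linarith
    · have : ∑ j, (ξc j + 1) / 2 = ((∑ j, ξc j) + nv) / 2 := by
        rw [← Finset.sum_div, Finset.sum_add_distrib]; simp
      rw [this, hsc]; ring
    · intro j hj
      have h1 := hle j
      rw [hmul j, hj] at h1
      have h0 : (0:ℝ) ≤ (ξc j + 1) / 2 := by have := (hξc j).1; linarith
      linarith
  · rintro ⟨lam, hnn, hsum, ⟨i, hi⟩, rfl⟩
    have hlam1 : ∀ j, lam j ≤ 1 := by
      intro j
      calc lam j ≤ ∑ k, lam k := Finset.single_le_sum (fun k _ => hnn k) (Finset.mem_univ j)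
        _ = 1 := hsum
    refine ⟨(lam, fun k => if k = i then 1 else 0),
      ⟨fun j => 2 * lam j - 1, fun k => if k = i then 1 else -1, ?_, ?_, ?_, ?_, ?_, ?_, ?_⟩, rfl⟩
    · intro j
      constructor
      · have := hnn j; simp; linarith
      · have := hlam1 j; simp; linarith
    · intro k; by_cases hk : k = i <;> simp [hk]
    · have : ∑ j, (2 * lam j - 1) = 2 * (∑ j, lam j) - nv := by
        rw [Finset.sum_sub_distrib, ← Finset.mul_sum]; simp
      rw [this, hsum]; ring
    · have : ∀ k : Fin N, (if k = i then (1:ℝ) else -1) = (if k = i then 2 else 0) - 1 := by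
        intro k; split <;> norm_num
      rw [Finset.sum_congr rfl (fun k _ => this k), Finset.sum_sub_distrib]
      simp
    · funext j; simp
    · funext k; by_cases hk : k = i <;> simp [hk]
    · intro j
      simp only
      have hmul : M.mulVec (fun k => if k = i then (1:ℝ) else 0) j = M j i := by
        simp [mulVec, dotProduct, mul_ite]
      rw [hmul]
      rcases hM j i with h | h
      · rw [h, hi j h]; norm_num
      · rw [h]; have := hlam1 j; linarith
end

section
/- Let V ∈ ℝ^{(n+1) × n_v} and let M ∈ ℝ^{n_v × N} have all entries in {0, 1}. Define D = { (λ, δ) ∈ ℝ^{n_v} × ℝ^N : λ = (ξᶜ + 𝟏)/2 and δ = (ξᵇ + 𝟏)/2 for some ξᶜ ∈ [−1, 1]^{n_v} and ξᵇ ∈ {−1, 1}^N with 𝟏ᵀξᶜ = 2 − n_v, 𝟏ᵀξᵇ = 2 − N, and λ − Mδ ≤ 0 componentwise }, Z_SOS = { Vλ : (λ, δ) ∈ D }, and S = { Vλ : λ ≥ 0, 𝟏ᵀλ = 1, ∃ i ∈ {1,…,N} with λ_j = 0 for every j with M_{j,i} = 0 }. Then Z_SOS ⊆ S. -/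
open Set Matrix

/-- **Forward containment in Theorem 4:** `Z_SOS ⊆ S`. -/
theorem hybrid_zonotope_subset_SOS {n nv N : ℕ}
    (V : Matrix (Fin (n + 1)) (Fin nv) ℝ)
    (M : Matrix (Fin nv) (Fin N) ℝ)
    (hM : ∀ j i, M j i = 0 ∨ M j i = 1)
    (D : Set ((Fin nv → ℝ) × (Fin N → ℝ)))
    (hD : D = {p | ∃ ξc : Fin nv → ℝ, ∃ ξb : Fin N → ℝ,
      (∀ j, ξc j ∈ Icc (-1 : ℝ) 1) ∧ (∀ i, ξb i = -1 ∨ ξb i = 1) ∧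
      (∑ j, ξc j) = 2 - (nv : ℝ) ∧ (∑ i, ξb i) = 2 - (N : ℝ) ∧
      p.1 = (fun j => (ξc j + 1) / 2) ∧ p.2 = (fun i => (ξb i + 1) / 2) ∧
      (∀ j, p.1 j - M.mulVec p.2 j ≤ 0)})
    (Zsos S : Set (Fin (n + 1) → ℝ))
    (hZ : Zsos = {z | ∃ p ∈ D, z = V.mulVec p.1})
    (hS : S = {z | ∃ lam : Fin nv → ℝ, (∀ j, 0 ≤ lam j) ∧ (∑ j, lam j) = 1 ∧
      (∃ i : Fin N, ∀ j, M j i = 0 → lam j = 0) ∧ z = V.mulVec lam}) :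
    Zsos ⊆ S := by
  subst hD hZ hS
  rintro z ⟨⟨lam, δ⟩, ⟨ξc, ξb, hξc, hξb, hsc, hsb, hl, hd, hle⟩, rfl⟩
  simp only at hl hd hle
  subst hl hd
  -- there is i with ξb i = 1
  obtain ⟨i, hi⟩ : ∃ i, ξb i = 1 := by
    by_contra h
    push_neg at h
    have hall : ∀ i, ξb i = -1 := fun i => (hξb i).resolve_right (h i)
    have : (∑ i, ξb i) = -(N : ℝ) := by simp [hall]
    rw [hsb] at this; linarith
  have hδnn : ∀ k, 0 ≤ (ξb k + 1) / 2 := by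
    intro k; rcases hξb k with h | h <;> rw [h] <;> norm_num
  have hδsum : (∑ k, (ξb k + 1) / 2) = 1 := by
    rw [← Finset.sum_div, Finset.sum_add_distrib, hsb]
    simp
  have hδzero : ∀ k, k ≠ i → (ξb k + 1) / 2 = 0 := by
    have hrest : (∑ k ∈ Finset.univ.erase i, (ξb k + 1) / 2) = 0 := by
      rw [Finset.sum_erase_eq_sub (Finset.mem_univ i), hδsum, hi]
      norm_num
    intro k hk
    have := (Finset.sum_eq_zero_iff_of_nonneg
      (fun k _ => hδnn k)).mp hrest k (Finset.mem_erase.mpr ⟨hk, Finset.mem_univ k⟩)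
    exact this
  refine ⟨fun j => (ξc j + 1) / 2, fun j => ?_, ?_, ⟨i, fun j hji => ?_⟩, rfl⟩
  · have := (hξc j).1; linarith
  · rw [← Finset.sum_div, Finset.sum_add_distrib, hsc]; simp
  · have hmv : M.mulVec (fun k => (ξb k + 1) / 2) j = 0 := by
      unfold Matrix.mulVec dotProduct
      apply Finset.sum_eq_zero
      intro k _
      by_cases hk : k = i
      · subst hk; simp [hji]
      · simp [hδzero k hk]
    have h1 := hle j
    rw [hmv] at h1
    have h2 := (hξc j).1
    linarith
end

section
/- Let V ∈ ℝ^{(n+1) × n_v} and let M ∈ ℝ^{n_v × N} have all entries in {0, 1}. Define D = { (λ, δ) ∈ ℝ^{n_v} × ℝ^N : λ = (ξᶜ + 𝟏)/2 and δ = (ξᵇ + 𝟏)/2 for some ξᶜ ∈ [−1, 1]^{n_v} and ξᵇ ∈ {−1, 1}^N with 𝟏ᵀξᶜ = 2 − n_v, 𝟏ᵀξᵇ = 2 − N, and λ − Mδ ≤ 0 componentwise }, Z_SOS = { Vλ : (λ, δ) ∈ D }, and S = { Vλ : λ ≥ 0, 𝟏ᵀλ = 1, ∃ i ∈ {1,…,N}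 with λ_j = 0 for every j with M_{j,i} = 0 }. Then S ⊆ Z_SOS. -/
open Set Matrix

/-- **Reverse containment in Theorem 4:** `S ⊆ Z_SOS`. -/
theorem SOS_subset_hybrid_zonotope {n nv N : ℕ}
    (V : Matrix (Fin (n + 1)) (Fin nv) ℝ)
    (M : Matrix (Fin nv) (Fin N) ℝ)
    (hM : ∀ j i, M j i = 0 ∨ M j i = 1)
    (D : Set ((Fin nv → ℝ) × (Fin N → ℝ)))
    (hD : D = {p | ∃ ξc : Fin nv → ℝ, ∃ ξb : Fin N → ℝ,
      (∀ j, ξc j ∈ Icc (-1 : ℝ) 1) ∧ (∀ i, ξb i = -1 ∨ ξb i = 1) ∧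
      (∑ j, ξc j) = 2 - (nv : ℝ) ∧ (∑ i, ξb i) = 2 - (N : ℝ) ∧
      p.1 = (fun j => (ξc j + 1) / 2) ∧ p.2 = (fun i => (ξb i + 1) / 2) ∧
      (∀ j, p.1 j - M.mulVec p.2 j ≤ 0)})
    (Zsos S : Set (Fin (n + 1) → ℝ))
    (hZ : Zsos = {z | ∃ p ∈ D, z = V.mulVec p.1})
    (hS : S = {z | ∃ lam : Fin nv → ℝ, (∀ j, 0 ≤ lam j) ∧ (∑ j, lam j) = 1 ∧
      (∃ i : Fin N, ∀ j, M j i = 0 → lam j = 0) ∧ z = V.mulVec lam}) :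
    S ⊆ Zsos := by
  subst hD hZ hS
  rintro z ⟨lam, hpos, hsum, ⟨i, hi⟩, rfl⟩
  have hle1 : ∀ j, lam j ≤ 1 := by
    intro j
    calc lam j ≤ ∑ k, lam k := Finset.single_le_sum (fun k _ => hpos k) (Finset.mem_univ j)
    _ = 1 := hsum
  refine ⟨(lam, fun i' => if i' = i then 1 else 0), ?_, ?_⟩
  · refine ⟨fun j => 2 * lam j - 1, fun i' => if i' = i then 1 else -1,
      ?_, ?_, ?_, ?_, ?_, ?_, ?_⟩
    · intro j
      simp only
      constructor <;> [linarith [hpos j]; linarith [hle1 j]]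
    · intro i'; by_cases h : i' = i <;> simp [h]
    · have : ∑ j, (2 * lam j - 1) = 2 * (∑ j, lam j) - nv := by
        rw [Finset.sum_sub_distrib, ← Finset.mul_sum]; simp
      rw [this, hsum]; ring
    · simp only
      have : ∑ i' ∈ Finset.univ \ {i}, (if i' = i then (1:ℝ) else -1) =
          ∑ i' ∈ Finset.univ \ {i}, (-1 : ℝ) := by
        apply Finset.sum_congr rfl
        intro x hx
        simp at hx
        simp [hx]
      calc ∑ i', (if i' = i then (1:ℝ) else -1)
          = (if i = i then (1:ℝ) else -1) + ∑ i' ∈ Finset.univ \ {i}, (if i' = i then (1:ℝ) else -1) := by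
            exact Finset.sum_eq_add_sum_sdiff_singleton_of_mem (Finset.mem_univ i) _
        _ = 1 + ∑ i' ∈ Finset.univ \ {i}, (-1 : ℝ) := by rw [this]; simp
        _ = 2 - N := by
            simp [Finset.sum_const, Finset.card_univ_diff]
            have hN : 1 ≤ N := Nat.pos_of_ne_zero (by rintro rfl; exact i.elim0)
            push_cast [Nat.cast_sub hN]
            ring
    · funext j; simp
    · funext i'; by_cases h : i' = i <;> simp [h] <;> norm_num
    · intro j
      simp only [mulVec, dotProduct]
      have : ∑ i', M j i' * (if i' = i then (1:ℝ) else 0) = M j i := by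
        simp [Finset.sum_ite_eq' Finset.univ i, mul_comm]
      rw [this]
      rcases hM j i with h | h
      · rw [h, hi j h]; simp
      · rw [h]; linarith [hle1 j]
  · rfl
end
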